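/- Any two ∞-adic odometers are topologically conjugate. That is, if α, β ∈ (ℕ \ {1})^ℕ are such that for every prime p there are infinitely many indices i with p dividing α(i), and likewise for β, then (Δ_α, φ_α) and (Δ_β, φ_β) are topologically conjugate. -/

import Mathlib

open Set

/-- Successor mod m on Fin m. -/
def finSucc {m : ℕ} (x : Fin m) : Fin m := ⟨(x.val + 1) % m, Nat.mod_lt _ x.pos⟩

/-- Auxiliary recursion defining the add-one-with-carry map on Δ_α = Π i, Fin (α i). -/
def phiAux (α : ℕ → ℕ) (x : ∀ i, Fin (α i)) : (i : ℕ) → Fin (α i)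
  | 0 => finSucc (x 0)
  | i + 1 => if (x i).val ≤ (phiAux α x i).val then x (i + 1) else finSucc (x (i + 1))

/-- The adding machine (odometer) map φ_α on Δ_α = Π i, Fin (α i). -/
def phi (α : ℕ → ℕ) (x : ∀ i, Fin (α i)) : ∀ i, Fin (α i) := fun i => phiAux α x i

/-!
A point `x` of `Δ_α` is determined by the integers `value α x k < Q_k = α 0 ⋯ α (k-1)` read off
its first `k` digits, and `φ_α` adds one to each of them modulo `Q_k`. So `Δ_α` is the inverse
limit of the cyclic groups `ℤ/Q_k` with `φ_α` acting as `+1`, and it only depends on which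
integers divide some `Q_k`. For an `∞`-adic odometer every positive integer does, so the two
inverse limits agree: each `Q^β_k` divides some `Q^α_{N k}`, and reducing the `α`-values mod
`Q^β_k` gives a conjugacy, with inverse built the same way.
-/

theorem add_mul_add_one_eq_mul_iff {a b A B : ℕ} (ha : a < A) (hb : b < B) :
    a + b * A + 1 = A * B ↔ a + 1 = A ∧ b + 1 = B := by
  constructor
  · intro h
    have hb' : b + 1 = B := by
      by_contra hne
      have : (b + 2) * A ≤ B * A := Nat.mul_le_mul_right _ (by omega)
      nlinarith
    subst hb'
    constructor <;> nlinarith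
  · rintro ⟨rfl, rfl⟩
    ring

theorem finSucc_val {m : ℕ} (x : Fin m) : (finSucc x).val = (x.val + 1) % m := rfl

theorem val_le_finSucc_val_iff {m : ℕ} (hm : 2 ≤ m) (x : Fin m) :
    x.val ≤ (finSucc x).val ↔ x.val + 1 ≠ m := by
  rw [finSucc_val]
  rcases (show x.val + 1 ≤ m from x.isLt).lt_or_eq with h | h
  · rw [Nat.mod_eq_of_lt h]
    omega
  · rw [h, Nat.mod_self]
    omega

theorem exists_dvd_prod_Ico {α : ℕ → ℕ} (hα : ∀ p : ℕ, p.Prime → {i : ℕ | p ∣ α i}.Infinite)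
    {m : ℕ} (hm : m ≠ 0) (s : ℕ) : ∃ n, m ∣ ∏ i ∈ Finset.Ico s n, α i := by
  induction m using Nat.recOnMul generalizing s with
  | zero => exact absurd rfl hm
  | one => exact ⟨s, one_dvd _⟩
  | prime p hp =>
    obtain ⟨i, hpi, hsi⟩ := (hα p hp).exists_gt s
    exact ⟨i + 1, hpi.trans <|
      Finset.dvd_prod_of_mem _ (Finset.mem_Ico.2 ⟨hsi.le, i.lt_succ_self⟩)⟩
  | mul a b iha ihb =>
    have extend {t n : ℕ} (n' : ℕ) (h : n ≤ n') :
        ∏ i ∈ Finset.Ico t n, α i ∣ ∏ i ∈ Finset.Ico t n', α i :=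
      Finset.prod_dvd_prod_of_subset _ _ _ (Finset.Ico_subset_Ico_right h)
    obtain ⟨n, hn⟩ := iha (left_ne_zero_of_mul hm) s
    obtain ⟨n', hn'⟩ := ihb (right_ne_zero_of_mul hm) (max s n)
    refine ⟨max (max s n) n', ?_⟩
    rw [← Finset.prod_Ico_consecutive _ (le_max_left s n) (le_max_left _ n')]
    exact mul_dvd_mul (hn.trans (extend _ (le_max_right s n)))
      (hn'.trans (extend _ (le_max_right _ n')))

namespace Odometer

variable {α β : ℕ → ℕ}

/-- `Q_k`, the period of `φ_α` on the first `k` digits. -/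
def modulus (α : ℕ → ℕ) (k : ℕ) : ℕ := ∏ i ∈ Finset.range k, α i

def value (α : ℕ → ℕ) (x : ∀ i, Fin (α i)) (k : ℕ) : ℕ :=
  ∑ i ∈ Finset.range k, (x i).val * modulus α i

theorem modulus_zero : modulus α 0 = 1 := Finset.prod_range_zero _

theorem modulus_succ (k : ℕ) : modulus α (k + 1) = modulus α k * α k :=
  Finset.prod_range_succ _ _

theorem modulus_pos (hα : ∀ i, 0 < α i) (k : ℕ) : 0 < modulus α k :=
  Finset.prod_pos fun i _ => hα i

theorem modulus_dvd_modulus {k k' : ℕ} (h : k ≤ k') : modulus α k ∣ modulus α k' :=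
  Finset.prod_dvd_prod_of_subset _ _ _ (Finset.range_subset_range.2 h)

theorem exists_strictMono_modulus_dvd (hα : ∀ p : ℕ, p.Prime → {i : ℕ | p ∣ α i}.Infinite)
    (hβ : ∀ i, 0 < β i) : ∃ N : ℕ → ℕ, StrictMono N ∧ ∀ k, modulus β k ∣ modulus α (N k) := by
  refine Filter.extraction_forall_of_eventually'
    (P := fun k n => modulus β k ∣ modulus α n) fun k => ?_
  obtain ⟨n, hn⟩ := exists_dvd_prod_Ico hα (modulus_pos hβ k).ne' 0
  rw [← Finset.range_eq_Ico] at hn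
  exact ⟨n, fun n' hn' => hn.trans (modulus_dvd_modulus hn')⟩

theorem value_zero (x : ∀ i, Fin (α i)) : value α x 0 = 0 := Finset.sum_range_zero _

theorem value_succ (x : ∀ i, Fin (α i)) (k : ℕ) :
    value α x (k + 1) = value α x k + (x k).val * modulus α k :=
  Finset.sum_range_succ _ _

theorem value_lt (x : ∀ i, Fin (α i)) (k : ℕ) : value α x k < modulus α k := by
  induction k with
  | zero => simp [value_zero, modulus_zero]
  | succ k ih =>
    calc value α x (k + 1) = value α x k + (x k).val * modulus α k := value_succ x k
      _ < modulus α k + (x k).val * modulus α k := by omega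
      _ = ((x k).val + 1) * modulus α k := by ring
      _ ≤ α k * modulus α k := Nat.mul_le_mul_right _ (x k).isLt
      _ = modulus α (k + 1) := by rw [modulus_succ, mul_comm]

theorem value_mod (x : ∀ i, Fin (α i)) {k k' : ℕ} (h : k ≤ k') :
    value α x k' % modulus α k = value α x k := by
  induction k', h using Nat.le_induction with
  | base => exact Nat.mod_eq_of_lt (value_lt x k)
  | succ n hn ih =>
    obtain ⟨c, hc⟩ := (modulus_dvd_modulus hn).mul_left (x n).val
    rw [value_succ, hc, Nat.add_mul_mod_self_left, ih]

theorem value_succ_add_one_eq_iff (x : ∀ i, Fin (α i)) (k : ℕ) :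
    value α x (k + 1) + 1 = modulus α (k + 1) ↔
      value α x k + 1 = modulus α k ∧ (x k).val + 1 = α k := by
  rw [value_succ, modulus_succ]
  exact add_mul_add_one_eq_mul_iff (value_lt x k) (x k).isLt

/-- The odometer increments digit `k` exactly when all lower digits are maximal. -/
theorem phi_apply (hα : ∀ i, 2 ≤ α i) (x : ∀ i, Fin (α i)) (k : ℕ) :
    phi α x k = if value α x k + 1 = modulus α k then finSucc (x k) else x k := by
  induction k with
  | zero => simp [phi, phiAux, value_zero, modulus_zero]
  | succ k ih =>
    have hcarry : (x k).val ≤ (phi α x k).val ↔ ¬ value α x (k + 1) + 1 = modulus α (k + 1) := by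
      rw [ih, value_succ_add_one_eq_iff]
      split_ifs with h
      · simp [h, val_le_finSucc_val_iff (hα k)]
      · simp [h]
    change (if (x k).val ≤ (phi α x k).val then _ else _) = _
    simp only [hcarry, ite_not]

theorem value_phi (hα : ∀ i, 2 ≤ α i) (x : ∀ i, Fin (α i)) (k : ℕ) :
    value α (phi α x) k = (value α x k + 1) % modulus α k := by
  induction k with
  | zero => simp [value_zero, modulus_zero]
  | succ k ih =>
    rw [value_succ, ih, phi_apply hα x k]
    split_ifs with h
    -- carry into digit `k`: `((x k + 1) % α k) * Q_k = ((x k + 1) * Q_k) % Q_{k+1}`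
    · rw [h, Nat.mod_self, zero_add, finSucc_val, ← Nat.mul_mod_mul_right, modulus_succ,
        mul_comm (α k), value_succ, add_right_comm, h]
      ring_nf
    · have hlt : value α x (k + 1) + 1 < modulus α (k + 1) :=
        lt_of_le_of_ne (value_lt x (k + 1)) (fun h' => h ((value_succ_add_one_eq_iff x k).1 h').1)
      have := value_lt x k
      rw [value_succ] at hlt
      rw [Nat.mod_eq_of_lt (by omega : value α x k + 1 < modulus α k), value_succ,
        Nat.mod_eq_of_lt hlt]
      ring

/-- Left inverse of `value`: the digits of a sequence of residues `r k mod Q_k`. -/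
def ofValues (β : ℕ → ℕ) (hβ : ∀ i, 0 < β i) (r : ℕ → ℕ) : ∀ i, Fin (β i) :=
  fun i => ⟨r (i + 1) / modulus β i % β i, Nat.mod_lt _ (hβ i)⟩

theorem ofValues_congr (hβ : ∀ i, 0 < β i) {r r' : ℕ → ℕ}
    (h : ∀ k, r k ≡ r' k [MOD modulus β k]) : ofValues β hβ r = ofValues β hβ r' := by
  funext i
  ext
  simp only [ofValues, ← Nat.mod_mul_right_div_self, ← modulus_succ]
  rw [h (i + 1)]

theorem ofValues_value (hα : ∀ i, 0 < α i) (x : ∀ i, Fin (α i)) :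
    ofValues α hα (value α x) = x := by
  funext i
  ext
  change value α x (i + 1) / modulus α i % α i = (x i).val
  rw [value_succ, mul_comm, Nat.add_mul_div_left _ _ (modulus_pos hα i),
    Nat.div_eq_of_lt (value_lt x i), zero_add, Nat.mod_eq_of_lt (x i).isLt]

theorem value_ofValues (hβ : ∀ i, 0 < β i) {r : ℕ → ℕ}
    (hr : ∀ k, r (k + 1) ≡ r k [MOD modulus β k]) (k : ℕ) :
    value β (ofValues β hβ r) k = r k % modulus β k := by
  induction k with
  | zero => simp [value_zero, modulus_zero, Nat.mod_one]
  | succ k ih =>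
    rw [value_succ, ih, ← hr k, modulus_succ, Nat.mod_mul, mul_comm]
    rfl

def transfer (α β : ℕ → ℕ) (hβ : ∀ i, 0 < β i) (N : ℕ → ℕ) (x : ∀ i, Fin (α i)) :
    ∀ i, Fin (β i) :=
  ofValues β hβ fun k => value α x (N k)

section transfer

variable (hβ : ∀ i, 0 < β i) {N : ℕ → ℕ}

theorem value_transfer (hN : StrictMono N) (hNdvd : ∀ k, modulus β k ∣ modulus α (N k))
    (x : ∀ i, Fin (α i)) (k : ℕ) :
    value β (transfer α β hβ N x) k = value α x (N k) % modulus β k := by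
  refine value_ofValues hβ (fun k => ?_) k
  change _ % _ = _ % _
  rw [← Nat.mod_mod_of_dvd _ (hNdvd k), value_mod x (hN.monotone k.le_succ)]

theorem transfer_phi (hN : StrictMono N) (hNdvd : ∀ k, modulus β k ∣ modulus α (N k))
    (hα2 : ∀ i, 2 ≤ α i) (hβ2 : ∀ i, 2 ≤ β i) (x : ∀ i, Fin (α i)) :
    transfer α β hβ N (phi α x) = phi β (transfer α β hβ N x) := by
  rw [← ofValues_value hβ (phi β _), transfer]
  refine ofValues_congr hβ fun k => ?_
  change _ % _ = _ % _
  rw [value_phi hα2, value_phi hβ2, value_transfer hβ hN hNdvd, Nat.mod_mod_of_dvd _ (hNdvd k),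
    Nat.mod_mod, Nat.mod_add_mod]

theorem transfer_transfer (hN : StrictMono N) (hNdvd : ∀ k, modulus β k ∣ modulus α (N k))
    (hα : ∀ i, 0 < α i) {M : ℕ → ℕ} (hM : StrictMono M)
    (hMdvd : ∀ k, modulus α k ∣ modulus β (M k)) (x : ∀ i, Fin (α i)) :
    transfer β α hα M (transfer α β hβ N x) = x := by
  conv_rhs => rw [← ofValues_value hα x]
  refine ofValues_congr hα fun k => ?_
  change _ % _ = _ % _
  rw [value_transfer hβ hN hNdvd, Nat.mod_mod_of_dvd _ (hMdvd k),
    value_mod x (hM.le_apply.trans hN.le_apply), Nat.mod_eq_of_lt (value_lt x k)]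

end transfer

theorem continuous_value (k : ℕ) : Continuous fun x : ∀ i, Fin (α i) => value α x k :=
  continuous_finsetSum _ fun i _ =>
    (continuous_of_discreteTopology (f := fun t : Fin (α i) => t.val * modulus α i)).comp
      (continuous_apply i)

theorem continuous_transfer (hβ : ∀ i, 0 < β i) (N : ℕ → ℕ) :
    Continuous (transfer α β hβ N) :=
  continuous_pi fun i =>
    (continuous_of_discreteTopology (f := fun n : ℕ =>
      (⟨n / modulus β i % β i, Nat.mod_lt _ (hβ i)⟩ : Fin (β i)))).comp
      (continuous_value (N (i + 1)))

end Odometer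

open Odometer in
/-- Any two ∞-adic odometers are topologically conjugate: if every prime divides
infinitely many of the α(i), and likewise for β, then (Δ_α, φ_α) and (Δ_β, φ_β) are
topologically conjugate. -/
theorem stmt8 (α β : ℕ → ℕ) (hα : ∀ i, 2 ≤ α i) (hβ : ∀ i, 2 ≤ β i)
    (hainf : ∀ p : ℕ, p.Prime → {i : ℕ | p ∣ α i}.Infinite)
    (hbinf : ∀ p : ℕ, p.Prime → {i : ℕ | p ∣ β i}.Infinite) :
    ∃ e : (∀ i, Fin (α i)) ≃ₜ (∀ i, Fin (β i)),
      ∀ x : ∀ i, Fin (α i), e (phi α x) = phi β (e x) := by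
  have hαpos : ∀ i, 0 < α i := fun i => by have := hα i; omega
  have hβpos : ∀ i, 0 < β i := fun i => by have := hβ i; omega
  obtain ⟨N, hN, hNdvd⟩ := exists_strictMono_modulus_dvd hainf hβpos
  obtain ⟨M, hM, hMdvd⟩ := exists_strictMono_modulus_dvd hbinf hαpos
  exact ⟨{ toFun := transfer α β hβpos N
           invFun := transfer β α hαpos M
           left_inv := transfer_transfer hβpos hN hNdvd hαpos hM hMdvd
           right_inv := transfer_transfer hαpos hM hMdvd hβpos hN hNdvd
           continuous_toFun := continuous_transfer hβpos N
           continuous_invFun := continuous_transfer hαpos M },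
    transfer_phi hβpos hN hNdvd hα hβ⟩
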